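/- arXiv:2504.03299 — 8 statements merged into one kernel-verified Lean document; each statement's English description precedes it below -/
import Mathlib

section
/- Let Z be any type and let j : M₃ × M₃ → Z satisfy j((t + Q x₁, Q n₁), (t + Q x₂, Q n₂)) = j((x₁, n₁), (x₂, n₂)) for all points of M₃ × M₃, all t ∈ ℝ³ and all linear isometry equivalences Q of ℝ³ (i.e. j is an E(3) invariant). Then there exists a function F : ℝ⁴ → Z such that j(p₁, p₂) = F(ι₁(p₁,p₂), ι₂(p₁,p₂), ι₃(p₁,p₂), ι₄(p₁,p₂)) for all (p₁, p₂) ∈ M₃ × M₃. That is, the collection (ι₁, ι₂, ι₃, ι₄) is universal. -/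
/-!
Two configurations with the same invariants give the frames `(n₁, n₂, x₂ - x₁)` and
`(m₁, m₂, y₂ - y₁)` the same Gram matrix (the diagonal entries `⟪nᵢ, nᵢ⟫ = 1` come for free).
Families with equal Gram matrices in a finite-dimensional inner product space differ by a
linear isometry `Q`, since the linear map `Σ cᵢ vᵢ ↦ Σ cᵢ wᵢ` is then well defined and isometric
on the span and extends to the whole space. Following `Q` by the translation sending `Q x₁` to
`y₁` maps one configuration onto the other, so an invariant `j` is constant on the fibres of `ι`.
-/

open scoped RealInnerProductSpace

/-- Three-dimensional position-orientation space `M₃ = {(x, n) ∈ ℝ³ × ℝ³ | ‖n‖ = 1}`. -/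
abbrev M3 : Type :=
  {p : EuclideanSpace ℝ (Fin 3) × EuclideanSpace ℝ (Fin 3) // ‖p.2‖ = 1}

/-- The action of the Euclidean group element `(t, Q)` on `M₃`:
`(t, Q) • (x, n) = (t + Q x, Q n)`. -/
noncomputable def E3act (t : EuclideanSpace ℝ (Fin 3))
    (Q : EuclideanSpace ℝ (Fin 3) ≃ₗᵢ[ℝ] EuclideanSpace ℝ (Fin 3)) (p : M3) : M3 :=
  ⟨(t + Q p.1.1, Q p.1.2), by rw [Q.norm_map]; exact p.2⟩

/-- The collection of four invariants `ι₁, ι₂, ι₃, ι₄ : M₃ × M₃ → ℝ`. -/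
noncomputable def iota (p : M3 × M3) : ℝ × ℝ × ℝ × ℝ :=
  (⟪p.2.1.1 - p.1.1.1, p.1.1.2⟫, ⟪p.2.1.1 - p.1.1.1, p.2.1.2⟫,
   ⟪p.2.1.1 - p.1.1.1, p.2.1.1 - p.1.1.1⟫, ⟪p.1.1.2, p.2.1.2⟫)

section

variable {𝕜 V E : Type*} [RCLike 𝕜] [NormedAddCommGroup E] [InnerProductSpace 𝕜 E]
  [AddCommGroup V] [Module 𝕜 V]

theorem LinearMap.exists_linearIsometry_range_of_norm_eq {f g : V →ₗ[𝕜] E}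
    (h : ∀ x, ‖f x‖ = ‖g x‖) : ∃ L : range f →ₗᵢ[𝕜] E, ∀ x, L (f.rangeRestrict x) = g x := by
  have hker : ker f ≤ ker g := fun x hx ↦ by
    rw [mem_ker, ← norm_eq_zero, ← h, norm_eq_zero, ← mem_ker]
    exact hx
  let L : range f →ₗ[𝕜] E := (ker f).liftQ g hker ∘ₗ f.quotKerEquivRange.symm.toLinearMap
  have hL : ∀ x, L (f.rangeRestrict x) = g x := fun x ↦ by
    change (ker f).liftQ g hker (f.quotKerEquivRange.symm ⟨f x, mem_range_self f x⟩) = g x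
    rw [quotKerEquivRange_symm_apply_image]
    rfl
  refine ⟨⟨L, ?_⟩, hL⟩
  rintro ⟨_, x, rfl⟩
  exact (congrArg norm (hL x)).trans (h x).symm

theorem LinearMap.exists_linearIsometryEquiv_of_norm_eq [FiniteDimensional 𝕜 E]
    {f g : V →ₗ[𝕜] E} (h : ∀ x, ‖f x‖ = ‖g x‖) : ∃ Q : E ≃ₗᵢ[𝕜] E, ∀ x, Q (f x) = g x := by
  obtain ⟨L, hL⟩ := exists_linearIsometry_range_of_norm_eq h
  refine ⟨L.extend.toLinearIsometryEquiv rfl, fun x ↦ ?_⟩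
  rw [LinearIsometry.toLinearIsometryEquiv_apply, ← hL, ← L.extend_apply]
  rfl

theorem Matrix.exists_linearIsometryEquiv_of_gram_eq [FiniteDimensional 𝕜 E]
    {ι : Type*} [Fintype ι] {v w : ι → E} (h : gram 𝕜 v = gram 𝕜 w) :
    ∃ Q : E ≃ₗᵢ[𝕜] E, ∀ i, Q (v i) = w i := by
  classical
  have hnorm (c : ι → 𝕜) :
      ‖Fintype.linearCombination 𝕜 v c‖ = ‖Fintype.linearCombination 𝕜 w c‖ := by
    rw [← sq_eq_sq₀ (norm_nonneg _) (norm_nonneg _), norm_sq_eq_re_inner (𝕜 := 𝕜),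
      norm_sq_eq_re_inner (𝕜 := 𝕜), Fintype.linearCombination_apply,
      Fintype.linearCombination_apply, ← star_dotProduct_gram_mulVec,
      ← star_dotProduct_gram_mulVec, h]
  obtain ⟨Q, hQ⟩ := LinearMap.exists_linearIsometryEquiv_of_norm_eq hnorm
  refine ⟨Q, fun i ↦ ?_⟩
  simpa using hQ (Pi.single i 1)

end

theorem exists_E3act_eq_of_iota_eq {p q : M3 × M3} (h : iota p = iota q) :
    ∃ t Q, (E3act t Q p.1, E3act t Q p.2) = q := by
  obtain ⟨⟨⟨x₁, n₁⟩, hn₁⟩, ⟨⟨x₂, n₂⟩, hn₂⟩⟩ := p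
  obtain ⟨⟨⟨y₁, m₁⟩, hm₁⟩, ⟨⟨y₂, m₂⟩, hm₂⟩⟩ := q
  obtain ⟨h₁, h₂, h₃, h₄⟩ : ⟪x₂ - x₁, n₁⟫ = ⟪y₂ - y₁, m₁⟫ ∧ ⟪x₂ - x₁, n₂⟫ = ⟪y₂ - y₁, m₂⟫ ∧
      ⟪x₂ - x₁, x₂ - x₁⟫ = ⟪y₂ - y₁, y₂ - y₁⟫ ∧ ⟪n₁, n₂⟫ = ⟪m₁, m₂⟫ := by
    simpa [iota] using h
  have hgram : Matrix.gram ℝ ![n₁, n₂, x₂ - x₁] = Matrix.gram ℝ ![m₁, m₂, y₂ - y₁] := by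
    have hn₁ : ⟪n₁, n₁⟫ = ⟪m₁, m₁⟫ := by
      rw [real_inner_self_eq_norm_sq, real_inner_self_eq_norm_sq, hn₁.trans hm₁.symm]
    have hn₂ : ⟪n₂, n₂⟫ = ⟪m₂, m₂⟫ := by
      rw [real_inner_self_eq_norm_sq, real_inner_self_eq_norm_sq, hn₂.trans hm₂.symm]
    ext i j
    fin_cases i <;> fin_cases j <;>
      simp only [Matrix.gram_apply, Fin.reduceFinMk, Fin.isValue, Matrix.cons_val] <;>
      first | assumption | (rw [real_inner_comm, eq_comm, real_inner_comm]; symm; assumption)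
  obtain ⟨Q, hQ⟩ := Matrix.exists_linearIsometryEquiv_of_gram_eq hgram
  refine ⟨y₁ - Q x₁, Q, ?_⟩
  have hQ₁ : Q n₁ = m₁ := hQ 0
  have hQ₂ : Q n₂ = m₂ := hQ 1
  have hQx : Q x₂ - Q x₁ = y₂ - y₁ := by simpa using hQ 2
  refine Prod.ext (Subtype.ext (Prod.ext ?_ hQ₁)) (Subtype.ext (Prod.ext ?_ hQ₂))
  · exact sub_add_cancel y₁ (Q x₁)
  · change y₁ - Q x₁ + Q x₂ = y₂
    rw [← eq_sub_iff_add_eq.mp hQx]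
    abel

theorem factorsThrough_iota {Z : Type*} {j : M3 × M3 → Z}
    (hj : ∀ (t : EuclideanSpace ℝ (Fin 3))
      (Q : EuclideanSpace ℝ (Fin 3) ≃ₗᵢ[ℝ] EuclideanSpace ℝ (Fin 3)) (p₁ p₂ : M3),
      j (E3act t Q p₁, E3act t Q p₂) = j (p₁, p₂)) :
    j.FactorsThrough iota := by
  intro p q h
  obtain ⟨t, Q, rfl⟩ := exists_E3act_eq_of_iota_eq h
  exact (hj t Q p.1 p.2).symm

instance : Nonempty M3 := ⟨⟨(0, EuclideanSpace.single 0 1), by simp⟩⟩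

/-- Universality of the collection `(ι₁, ι₂, ι₃, ι₄)`: every `E(3)`-invariant function
`j : M₃ × M₃ → Z` is a function of the four invariants. -/
theorem invariants_universal {Z : Type*} (j : M3 × M3 → Z)
    (hj : ∀ (t : EuclideanSpace ℝ (Fin 3))
      (Q : EuclideanSpace ℝ (Fin 3) ≃ₗᵢ[ℝ] EuclideanSpace ℝ (Fin 3)) (p₁ p₂ : M3),
      j (E3act t Q p₁, E3act t Q p₂) = j (p₁, p₂)) :
    ∃ F : ℝ × ℝ × ℝ × ℝ → Z, ∀ p : M3 × M3, j p = F (iota p) := by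
  have : Nonempty Z := ⟨j (Classical.arbitrary _)⟩
  obtain ⟨F, hF⟩ := (Function.factorsThrough_iff j).mp (factorsThrough_iota hj)
  exact ⟨F, congrFun hF⟩
end

section
/- Let x₁, x₂, n₁, n₂ ∈ ℝ³ with ‖n₁‖ = 1, ‖n₂‖ = 1, and suppose the three vectors x₂ - x₁, n₁, n₂ are linearly independent (hence form a basis of ℝ³). Let c₁, c₂, c₃, c₄ ∈ ℝ be such that for all ẋ₁, ẋ₂, ṅ₁, ṅ₂ ∈ ℝ³ satisfying ⟪ṅ₁, n₁⟫ = 0 and ⟪ṅ₂, n₂⟫ = 0, one has c₁·(⟪ẋ₂ - ẋ₁, n₁⟫ + ⟪x₂ - x₁, ṅ₁⟫) + c₂·(⟪ẋ₂ - ẋ₁, n₂⟫ + ⟪x₂ - x₁, ṅ₂⟫) + c₃·2⟪ẋ₂ - ẋ₁, x₂ - x₁⟫ + c₄·(⟪ṅ₁, n₂⟫ + ⟪n₁, ṅ₂⟫) = 0. Then c₁ = c₂ = c₃ = c₄ = 0. That is, the differentials of ι₁, ι₂, ι₃, ι₄ at such a point of M₃ × M₃ are linearly independent on the tangent space. -/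
open scoped RealInnerProductSpace

/-!
Testing the relation against the tangent vector with only `ẋ₂ = s := c₁ n₁ + c₂ n₂ + 2 c₃ (x₂ - x₁)`
nonzero yields `⟪s, s⟫ = 0`, so `s = 0` and `c₁ = c₂ = c₃ = 0` by linear independence.
Since `n₂ ∉ ℝ ∙ n₁`, some `w ⊥ n₁` has `⟪w, n₂⟫ ≠ 0`; testing with only `ṅ₁ = w` nonzero
then leaves `c₄ ⟪w, n₂⟫ = 0`.
-/

lemma LinearIndependent.eq_zero_of_triple {R M : Type*} [Ring R] [AddCommGroup M] [Module R M]
    {x y z : M} (h : LinearIndependent R ![x, y, z]) {r s t : R}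
    (h' : r • x + s • y + t • z = 0) : r = 0 ∧ s = 0 ∧ t = 0 := by
  have := Fintype.linearIndependent_iff.mp h ![r, s, t]
    (by simpa [Fin.sum_univ_three, add_assoc] using h')
  exact ⟨this 0, this 1, this 2⟩

lemma LinearIndependent.notMem_span_singleton_of_triple {R M : Type*} [Ring R] [Nontrivial R]
    [AddCommGroup M] [Module R M] {x y z : M} (h : LinearIndependent R ![x, y, z]) :
    z ∉ R ∙ y := by
  simpa [Set.image_singleton] using h.notMem_span_image (s := {1}) (x := 2) (by decide)

lemma Submodule.exists_mem_orthogonal_inner_ne_zero {𝕜 E : Type*} [RCLike 𝕜]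
    [NormedAddCommGroup E] [InnerProductSpace 𝕜 E] {K : Submodule 𝕜 E} [K.HasOrthogonalProjection]
    {v : E} (hv : v ∉ K) : ∃ w ∈ Kᗮ, inner 𝕜 w v ≠ 0 := by
  rw [← K.orthogonal_orthogonal, Submodule.mem_orthogonal] at hv
  push Not at hv
  exact hv

theorem differentials_linearly_independent_general
    (x₁ x₂ n₁ n₂ : EuclideanSpace ℝ (Fin 3))
    (hbasis : LinearIndependent ℝ ![x₂ - x₁, n₁, n₂])
    (c₁ c₂ c₃ c₄ : ℝ)
    (h : ∀ dx₁ dx₂ dn₁ dn₂ : EuclideanSpace ℝ (Fin 3), ⟪dn₁, n₁⟫ = 0 → ⟪dn₂, n₂⟫ = 0 →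
      c₁ * (⟪dx₂ - dx₁, n₁⟫ + ⟪x₂ - x₁, dn₁⟫) +
      c₂ * (⟪dx₂ - dx₁, n₂⟫ + ⟪x₂ - x₁, dn₂⟫) +
      c₃ * (2 * ⟪dx₂ - dx₁, x₂ - x₁⟫) +
      c₄ * (⟪dn₁, n₂⟫ + ⟪n₁, dn₂⟫) = 0) :
    c₁ = 0 ∧ c₂ = 0 ∧ c₃ = 0 ∧ c₄ = 0 := by
  set s := (2 * c₃) • (x₂ - x₁) + c₁ • n₁ + c₂ • n₂
  have hs : ⟪s, (2 * c₃) • (x₂ - x₁) + c₁ • n₁ + c₂ • n₂⟫ = 0 := by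
    have hdx₂ := h 0 s 0 0 (inner_zero_left _) (inner_zero_left _)
    simp only [inner_add_right, real_inner_smul_right, sub_zero, inner_zero_left,
      inner_zero_right] at hdx₂ ⊢
    linarith
  obtain ⟨hc₃, hc₁, hc₂⟩ := hbasis.eq_zero_of_triple (inner_self_eq_zero.mp hs)
  obtain ⟨w, hw, hwn₂⟩ :=
    Submodule.exists_mem_orthogonal_inner_ne_zero hbasis.notMem_span_singleton_of_triple
  have hdn₁ := h 0 0 w 0 (Submodule.mem_orthogonal_singleton_iff_inner_left.mp hw)
    (inner_zero_left _)
  simp only [hc₁, sub_self, inner_zero_left, inner_zero_right, zero_mul, mul_zero, add_zero,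
    zero_add] at hdn₁
  exact ⟨hc₁, hc₂, by linarith, (mul_eq_zero.mp hdn₁).resolve_right hwn₂⟩

/-- At a point of `M₃ × M₃` where `x₂ - x₁, n₁, n₂` form a basis of `ℝ³`, the
differentials of the four invariants `ι₁, ι₂, ι₃, ι₄` are linearly independent
on the tangent space (tangent vectors `((dx₁, dn₁), (dx₂, dn₂))` satisfy
`⟪dn₁, n₁⟫ = 0` and `⟪dn₂, n₂⟫ = 0`). -/
theorem differentials_linearly_independent
    (x₁ x₂ n₁ n₂ : EuclideanSpace ℝ (Fin 3)) (hn₁ : ‖n₁‖ = 1) (hn₂ : ‖n₂‖ = 1)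
    (hbasis : LinearIndependent ℝ ![x₂ - x₁, n₁, n₂])
    (c₁ c₂ c₃ c₄ : ℝ)
    (h : ∀ dx₁ dx₂ dn₁ dn₂ : EuclideanSpace ℝ (Fin 3), ⟪dn₁, n₁⟫ = 0 → ⟪dn₂, n₂⟫ = 0 →
      c₁ * (⟪dx₂ - dx₁, n₁⟫ + ⟪x₂ - x₁, dn₁⟫) +
      c₂ * (⟪dx₂ - dx₁, n₂⟫ + ⟪x₂ - x₁, dn₂⟫) +
      c₃ * (2 * ⟪dx₂ - dx₁, x₂ - x₁⟫) +
      c₄ * (⟪dn₁, n₂⟫ + ⟪n₁, dn₂⟫) = 0) :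
    c₁ = 0 ∧ c₂ = 0 ∧ c₃ = 0 ∧ c₄ = 0 :=
  differentials_linearly_independent_general x₁ x₂ n₁ n₂ hbasis c₁ c₂ c₃ c₄ h
end

section
/- Let x₁, x₂, n₁, n₂ ∈ ℝ³ with ‖n₁‖ = 1, ‖n₂‖ = 1, and suppose x₂ - x₁, n₁, n₂ are linearly independent. Then the linear map sending a tangent vector (ẋ₁, ṅ₁, ẋ₂, ṅ₂) ∈ ℝ³ × ℝ³ × ℝ³ × ℝ³ with ⟪ṅ₁, n₁⟫ = 0 and ⟪ṅ₂, n₂⟫ = 0 to the vector (⟪ẋ₂ - ẋ₁, n₁⟫ + ⟪x₂ - x₁, ṅ₁⟫, ⟪ẋ₂ - ẋ₁, n₂⟫ + ⟪x₂ - x₁, ṅ₂⟫, 2⟪ẋ₂ - ẋ₁, x₂ - x₁⟫, ⟪ṅ₁, n₂⟫ + ⟪n₁, ṅ₂⟫) ∈ ℝ⁴ is surjective onto ℝ⁴. That is, ι = (ι₁, ι₂, ι₃, ι₄) is a submersion at every such point of M₃ × M₃. -/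
open scoped RealInnerProductSpace


lemma exists_dual (v : Fin 3 → EuclideanSpace ℝ (Fin 3)) (hv : LinearIndependent ℝ v)
    (c : Fin 3 → ℝ) : ∃ w : EuclideanSpace ℝ (Fin 3), ∀ i, ⟪w, v i⟫ = c i := by
  set T : EuclideanSpace ℝ (Fin 3) →ₗ[ℝ] (Fin 3 → ℝ) :=
    LinearMap.pi fun i => (innerSL ℝ (v i)).toLinearMap with hT
  have hspan : Submodule.span ℝ (Set.range v) = ⊤ := by
    apply hv.span_eq_top_of_card_eq_finrank
    simp [finrank_euclideanSpace_fin]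
  have hinj : Function.Injective T := by
    rw [← LinearMap.ker_eq_bot, Submodule.eq_bot_iff]
    intro w hw
    have hw' : ∀ i, ⟪v i, w⟫ = 0 := fun i => congrFun hw i
    have : w ∈ (Submodule.span ℝ (Set.range v))ᗮ := by
      rw [Submodule.mem_orthogonal]
      intro u hu
      induction hu using Submodule.span_induction with
      | mem u hu => obtain ⟨i, rfl⟩ := hu; exact hw' i
      | zero => simp
      | add a b _ _ ha hb => simp [inner_add_left, ha, hb]
      | smul r a _ ha => simp [inner_smul_left, ha]
    rw [hspan, Submodule.top_orthogonal_eq_bot] at this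
    exact this
  have hsurj : Function.Surjective T :=
    (LinearMap.injective_iff_surjective_of_finrank_eq_finrank (by simp [finrank_euclideanSpace_fin])).mp hinj
  obtain ⟨w, hw⟩ := hsurj c
  exact ⟨w, fun i => by rw [real_inner_comm]; exact congrFun hw i⟩

/-- At a point of `M₃ × M₃` where `x₂ - x₁, n₁, n₂` are linearly independent, the
differential of the collection of invariants `(ι₁, ι₂, ι₃, ι₄)` is surjective from the
tangent space onto `ℝ⁴`; i.e. `ι` is a submersion at every such point. -/
theorem differential_surjective
    (x₁ x₂ n₁ n₂ : EuclideanSpace ℝ (Fin 3)) (hn₁ : ‖n₁‖ = 1) (hn₂ : ‖n₂‖ = 1)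
    (hbasis : LinearIndependent ℝ ![x₂ - x₁, n₁, n₂]) :
    ∀ y₁ y₂ y₃ y₄ : ℝ, ∃ dx₁ dn₁ dx₂ dn₂ : EuclideanSpace ℝ (Fin 3),
      ⟪dn₁, n₁⟫ = 0 ∧ ⟪dn₂, n₂⟫ = 0 ∧
      ⟪dx₂ - dx₁, n₁⟫ + ⟪x₂ - x₁, dn₁⟫ = y₁ ∧
      ⟪dx₂ - dx₁, n₂⟫ + ⟪x₂ - x₁, dn₂⟫ = y₂ ∧
      2 * ⟪dx₂ - dx₁, x₂ - x₁⟫ = y₃ ∧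
      ⟪dn₁, n₂⟫ + ⟪n₁, dn₂⟫ = y₄ := by
  intro y₁ y₂ y₃ y₄
  obtain ⟨dx₂, hdx⟩ := exists_dual _ hbasis ![y₃ / 2, y₁, 0]
  obtain ⟨dn₂, hdn⟩ := exists_dual _ hbasis ![y₂, y₄, 0]
  have hdx0 := hdx 0; have hdx1 := hdx 1; have hdx2 := hdx 2
  have hdn0 := hdn 0; have hdn1 := hdn 1; have hdn2 := hdn 2
  simp only [Matrix.cons_val_zero, Matrix.cons_val_one, Matrix.head_cons,
    Matrix.cons_val_two, Matrix.tail_cons] at hdx0 hdx1 hdx2 hdn0 hdn1 hdn2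
  refine ⟨0, 0, dx₂, dn₂, by simp, hdn2, ?_, ?_, ?_, ?_⟩
  · simp [hdx1]
  · simp [hdx2, real_inner_comm dn₂ (x₂ - x₁) ▸ hdn0]
  · simp [hdx0]; linarith
  · simp [real_inner_comm n₁ dn₂ ▸ hdn1]
end

section
/- The set U of quadruples (x₁, n₁, x₂, n₂) with (x₁, n₁), (x₂, n₂) ∈ M₃ and such that the three vectors x₂ - x₁, n₁, n₂ are linearly independent in ℝ³ is an open and dense subset of M₃ × M₃ (with M₃ × M₃ carrying the subspace topology inherited from ℝ³ × ℝ³ × ℝ³ × ℝ³). -/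
open Module Submodule

section

variable {K V : Type*} [DivisionRing K] [AddCommGroup V] [Module K V]

theorem Submodule.span_range_ne_top_of_card_lt {k : ℕ} (v : Fin k → V) (hk : k < finrank K V) :
    span K (Set.range v) ≠ ⊤ := fun h => by
  have := finrank_range_le_card (R := K) v
  rw [Set.finrank, h, finrank_top, Fintype.card_fin] at this
  omega

end

section

variable {E : Type*} [NormedAddCommGroup E] [NormedSpace ℝ E]

theorem Submodule.dense_compl {S : Submodule ℝ E} (hS : S ≠ ⊤) : Dense (S : Set E)ᶜ :=
  interior_eq_empty_iff_dense_compl.1 <|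
    Set.not_nonempty_iff_eq_empty.1 fun h => hS (S.eq_top_of_nonempty_interior' h)

theorem Submodule.dense_unitSphere_compl {S : Submodule ℝ E} (hS : S ≠ ⊤) :
    Dense {n : {n : E // ‖n‖ = 1} | (n : E) ∉ S} := by
  intro n
  rw [closure_subtype]
  have hn : ‖(n : E)‖ ≠ 0 := by simp [n.2]
  have hproj : ContinuousAt (fun v : E => ‖v‖⁻¹ • v) n :=
    (continuous_norm.continuousAt.inv₀ hn).smul continuousAt_id
  have := mem_closure_image hproj (Submodule.dense_compl hS n)
  rw [n.2, inv_one, one_smul] at this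
  refine closure_mono ?_ this
  rintro _ ⟨v, hv, rfl⟩
  have hv0 : v ≠ 0 := fun h => hv (h ▸ S.zero_mem)
  exact ⟨⟨‖v‖⁻¹ • v, norm_smul_inv_norm hv0⟩,
    fun h => hv ((S.smul_mem_iff (inv_ne_zero (norm_ne_zero_iff.2 hv0))).1 h), rfl⟩

end

theorem dense_setOf_linearIndependent_orientations :
    Dense {p : M3 × M3 | LinearIndependent ℝ ![p.1.1.2, p.2.1.2]} := by
  rintro ⟨⟨⟨x₁, n₁⟩, h₁⟩, ⟨⟨x₂, n₂⟩, h₂⟩⟩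
  let g : {n : EuclideanSpace ℝ (Fin 3) // ‖n‖ = 1} → M3 × M3 :=
    fun n => (⟨(x₁, n), n.2⟩, ⟨(x₂, n₂), h₂⟩)
  have hg : Continuous g := by fun_prop
  have hS : span ℝ (Set.range ![n₂]) ≠ ⊤ := span_range_ne_top_of_card_lt _ (by simp)
  refine closure_mono ?_ (mem_closure_image (f := g) hg.continuousAt
    (Submodule.dense_unitSphere_compl hS ⟨n₁, h₁⟩))
  rintro _ ⟨n, hn, rfl⟩
  have hn₂ : n₂ ≠ 0 := norm_ne_zero_iff.1 (h₂ ▸ one_ne_zero)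
  exact linearIndependent_finCons.2 ⟨linearIndependent_unique_iff.2 hn₂, hn⟩

theorem setOf_linearIndependent_orientations_subset_closure :
    {p : M3 × M3 | LinearIndependent ℝ ![p.1.1.2, p.2.1.2]} ⊆
      closure {p : M3 × M3 | LinearIndependent ℝ ![p.2.1.1 - p.1.1.1, p.1.1.2, p.2.1.2]} := by
  rintro ⟨⟨⟨x₁, n₁⟩, h₁⟩, ⟨⟨x₂, n₂⟩, h₂⟩⟩ hp
  let g : EuclideanSpace ℝ (Fin 3) → M3 × M3 := fun x => (⟨(x₁, n₁), h₁⟩, ⟨(x, n₂), h₂⟩)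
  have hg : Continuous g := by fun_prop
  have hS : span ℝ (Set.range ![n₁, n₂]) ≠ ⊤ := span_range_ne_top_of_card_lt _ (by simp)
  have hdense : Dense {x | x - x₁ ∉ span ℝ (Set.range ![n₁, n₂])} :=
    (Submodule.dense_compl hS).preimage (Homeomorph.subRight x₁).isOpenMap
  refine closure_mono ?_ (mem_closure_image (f := g) hg.continuousAt (hdense x₂))
  rintro _ ⟨x, hx, rfl⟩
  exact linearIndependent_finCons.2 ⟨hp, hx⟩

/-- The set of pairs `((x₁, n₁), (x₂, n₂)) ∈ M₃ × M₃` such that `x₂ - x₁, n₁, n₂` are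
linearly independent (hence form a basis of `ℝ³`) is open and dense in `M₃ × M₃`. -/
theorem independent_set_open_dense :
    IsOpen {p : M3 × M3 |
        LinearIndependent ℝ ![p.2.1.1 - p.1.1.1, p.1.1.2, p.2.1.2]} ∧
    Dense {p : M3 × M3 |
        LinearIndependent ℝ ![p.2.1.1 - p.1.1.1, p.1.1.2, p.2.1.2]} := by
  have hcont : Continuous fun p : M3 × M3 => ![p.2.1.1 - p.1.1.1, p.1.1.2, p.2.1.2] := by
    fun_prop
  exact ⟨isOpen_setOfPred_linearIndependent.preimage hcont,
    (dense_setOf_linearIndependent_orientations.mono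
      setOf_linearIndependent_orientations_subset_closure).of_closure⟩
end

section
/- Let E be a finite-dimensional real normed vector space, let U ⊆ E be open, and let f : E → ℝⁿ (n ≥ 1) be a map which at every point x ∈ U has a strict Fréchet derivative f'(x) : E →L[ℝ] ℝⁿ that is surjective. Then for every nonempty open subset V ⊆ U and every index i ∈ Fin n, there is no function h : ({j : Fin n // j ≠ i} → ℝ) → ℝ such that (f x) i = h (fun j => (f x) j.val) for all x ∈ V. That is, the component functions f₁, …, f_n are everywhere independent on U. -/
/-- If `f : E → ℝⁿ` (`E` a finite-dimensional real normed space, `n ≥ 1`) has at every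
point of an open set `U` a surjective strict Fréchet derivative, then the component
functions of `f` are everywhere independent on `U`: on no nonempty open subset `V ⊆ U`
can one component of `f` be written as a function of the remaining components. -/
theorem submersion_components_everywhere_independent
    {E : Type*} [NormedAddCommGroup E] [NormedSpace ℝ E] [FiniteDimensional ℝ E]
    (n : ℕ) (hn : 1 ≤ n) (U : Set E) (hU : IsOpen U)
    (f : E → EuclideanSpace ℝ (Fin n))
    (f' : E → E →L[ℝ] EuclideanSpace ℝ (Fin n))
    (hf : ∀ x ∈ U, HasStrictFDerivAt f (f' x) x)
    (hsurj : ∀ x ∈ U, Function.Surjective (f' x)) :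
    ∀ V : Set E, V ⊆ U → IsOpen V → V.Nonempty → ∀ i : Fin n,
      ¬ ∃ h : ({j : Fin n // j ≠ i} → ℝ) → ℝ,
        ∀ x ∈ V, f x i = h (fun j => f x j.val) := by
  rintro V hVU hVopen ⟨x₀, hx₀⟩ i ⟨h, hh⟩
  have hmem : f '' V ∈ nhds (f x₀) := by
    rw [← (hf x₀ (hVU hx₀)).map_nhds_eq_of_surj (LinearMap.range_eq_top.2 (hsurj x₀ (hVU hx₀)))]
    exact Filter.image_mem_map (hVopen.mem_nhds hx₀)
  obtain ⟨ε, hε, hball⟩ := Metric.mem_nhds_iff.1 hmem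
  set y : EuclideanSpace ℝ (Fin n) := f x₀ + EuclideanSpace.single i (ε / 2) with hy
  have hyball : y ∈ Metric.ball (f x₀) ε := by
    have : dist y (f x₀) = ‖EuclideanSpace.single i (ε / 2)‖ := by
      rw [dist_eq_norm, hy, add_sub_cancel_left]
    rw [Metric.mem_ball, this, EuclideanSpace.norm_single]
    rw [Real.norm_eq_abs, abs_of_pos (by linarith)]
    linarith
  obtain ⟨x₁, hx₁, hfx₁⟩ := hball hyball
  have hothers : (fun j : {j : Fin n // j ≠ i} => f x₁ j.val)
      = fun j : {j : Fin n // j ≠ i} => f x₀ j.val := by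
    funext j
    have : f x₁ j.val = f x₀ j.val + EuclideanSpace.single i (ε / 2) j.val := by
      rw [hfx₁]; rfl
    rw [this, EuclideanSpace.single_apply, if_neg (fun hji => j.2 hji), add_zero]
  have h1 := hh x₁ hx₁
  have h0 := hh x₀ hx₀
  rw [hothers, ← h0] at h1
  have : f x₁ i = f x₀ i + ε / 2 := by
    rw [hfx₁]
    show f x₀ i + EuclideanSpace.single i (ε / 2) i = _
    rw [EuclideanSpace.single_apply, if_pos rfl]
  rw [this] at h1
  linarith
end

section
/- Let e₁, e₂, e₃ denote the standard orthonormal basis of ℝ³. Consider the pairs of position-orientations (p₁, p₂) = ((0, e₃), (e₁, e₂)) and (q₁, q₂) = ((0, e₃), (e₁, e₁)) in M₃ × M₃. Then the three Bekkers invariants agree on the two pairs: κ₁(p₁,p₂) = κ₁(q₁,q₂) = 0, κ₂(p₁,p₂) = κ₂(q₁,q₂) = 1, κ₃(p₁,p₂) = κ₃(q₁,q₂) = π/2; yet there is no t ∈ ℝ³ and no linear isometry equivalence Q of ℝ³ such that t + Q·0 = 0, Q e₃ = e₃, t + Q e₁ = e₁, and Q e₂ = e₁. Hence the two pairs lie in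 different E(3) orbits despite having equal Bekkers invariants. -/
open scoped RealInnerProductSpace

/- All three invariants only see the relative position `e₁` together with the orientations
`e₃, e₂` resp. `e₃, e₁`, and `e₁, e₂, e₃` are orthonormal, so the values coincide. A motion
sending the first pair to the second must fix the origin, hence is linear, and would have to
send both `e₁` and `e₂` to `e₁`, contradicting injectivity. -/

theorem eq_of_motion_fixes_zero_of_maps_to_same {R E : Type*} [Semiring R]
    [SeminormedAddCommGroup E] [Module R E] {t a b : E} (Q : E ≃ₗᵢ[R] E)
    (h₀ : t + Q 0 = 0) (ha : t + Q a = a) (hb : Q b = a) : a = b := by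
  obtain rfl : t = 0 := by simpa using h₀
  exact Q.injective ((zero_add (Q a)).symm.trans ha |>.trans hb.symm)

open Real in
/-- The Bekkers invariants `κ₁, κ₂, κ₃` agree on the two pairs of position-orientations
`(p₁, p₂) = ((0, e₃), (e₁, e₂))` and `(q₁, q₂) = ((0, e₃), (e₁, e₁))`, yet the two pairs
are not related by any Euclidean motion `(t, Q)`: the Bekkers invariants are not
universal. -/
theorem bekkers_invariants_agree_but_different_orbits :
    ∀ e₁ e₂ e₃ : EuclideanSpace ℝ (Fin 3),
      e₁ = EuclideanSpace.single 0 1 → e₂ = EuclideanSpace.single 1 1 →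
      e₃ = EuclideanSpace.single 2 1 →
      -- κ₁ on (p₁,p₂) and on (q₁,q₂)
      ⟪e₁ - (0 : EuclideanSpace ℝ (Fin 3)), e₃⟫ = 0 ∧
      ⟪e₁ - (0 : EuclideanSpace ℝ (Fin 3)), e₃⟫ = 0 ∧
      -- κ₂ on (p₁,p₂) and on (q₁,q₂)
      ‖(e₁ - (0 : EuclideanSpace ℝ (Fin 3))) -
        ⟪e₁ - (0 : EuclideanSpace ℝ (Fin 3)), e₃⟫ • e₃‖ = 1 ∧
      ‖(e₁ - (0 : EuclideanSpace ℝ (Fin 3))) -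
        ⟪e₁ - (0 : EuclideanSpace ℝ (Fin 3)), e₃⟫ • e₃‖ = 1 ∧
      -- κ₃ on (p₁,p₂) and on (q₁,q₂)
      arccos ⟪e₃, e₂⟫ = π / 2 ∧
      arccos ⟪e₃, e₁⟫ = π / 2 ∧
      -- but the two pairs are in different E(3) orbits
      ¬ ∃ (t : EuclideanSpace ℝ (Fin 3))
          (Q : EuclideanSpace ℝ (Fin 3) ≃ₗᵢ[ℝ] EuclideanSpace ℝ (Fin 3)),
          t + Q 0 = 0 ∧ Q e₃ = e₃ ∧ t + Q e₁ = e₁ ∧ Q e₂ = e₁ := by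
  intro e₁ e₂ e₃ he₁ he₂ he₃
  have hon := EuclideanSpace.orthonormal_single (𝕜 := ℝ) (ι := Fin 3)
  have h₁₃ : ⟪e₁, e₃⟫ = 0 := by subst_vars; exact hon.2 (by decide)
  have h₃₂ : ⟪e₃, e₂⟫ = 0 := by subst_vars; exact hon.2 (by decide)
  have h₃₁ : ⟪e₃, e₁⟫ = 0 := by subst_vars; exact hon.2 (by decide)
  have hκ₂ : ‖(e₁ - 0) - ⟪e₁ - 0, e₃⟫ • e₃‖ = 1 := by
    rw [sub_zero, h₁₃, zero_smul, sub_zero, he₁]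
    exact hon.1 0
  refine ⟨by simpa, by simpa, hκ₂, hκ₂, by simp [h₃₂], by simp [h₃₁], ?_⟩
  rintro ⟨t, Q, h₀, -, h₁, h₂⟩
  have h₁₂ : e₁ ≠ e₂ := by subst_vars; exact hon.linearIndependent.injective.ne (by decide)
  exact h₁₂ (eq_of_motion_fixes_zero_of_maps_to_same Q h₀ h₁ h₂)
end

section
/- There is no function F : ℝ³ → ℝ such that for all (x₁, n₁), (x₂, n₂) ∈ M₃ one has ⟪x₂ - x₁, n₂⟫ = F(κ₁((x₁,n₁),(x₂,n₂)), κ₂((x₁,n₁),(x₂,n₂)), κ₃((x₁,n₁),(x₂,n₂))). In particular, the E(3)-invariant ι((x₁,n₁),(x₂,n₂)) = ⟪x₂ - x₁, n₂⟫ is not a function of the three Bekkers invariants, so the collection (κ₁, κ₂, κ₃) is not universal. -/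
open scoped RealInnerProductSpace

open Real in
/-- The `E(3)`-invariant `ι((x₁,n₁),(x₂,n₂)) = ⟪x₂ - x₁, n₂⟫` is not a function of the
three Bekkers invariants `κ₁ = ⟪x₂ - x₁, n₁⟫`, `κ₂ = ‖(x₂ - x₁) - κ₁ • n₁‖`,
`κ₃ = arccos ⟪n₁, n₂⟫`; so the collection `(κ₁, κ₂, κ₃)` is not universal. -/
theorem bekkers_invariants_not_universal :
    ¬ ∃ F : ℝ × ℝ × ℝ → ℝ,
      ∀ x₁ n₁ x₂ n₂ : EuclideanSpace ℝ (Fin 3), ‖n₁‖ = 1 → ‖n₂‖ = 1 →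
        ⟪x₂ - x₁, n₂⟫ =
          F (⟪x₂ - x₁, n₁⟫, ‖(x₂ - x₁) - ⟪x₂ - x₁, n₁⟫ • n₁‖, arccos ⟪n₁, n₂⟫) := by
  rintro ⟨F, hF⟩
  set e : Fin 3 → EuclideanSpace ℝ (Fin 3) := fun i => EuclideanSpace.single i (1 : ℝ) with he
  have hnorm : ∀ i, ‖e i‖ = 1 := by
    intro i; simp [he, EuclideanSpace.norm_single]
  have h1 := hF 0 (e 0) (e 1) (e 1) (hnorm 0) (hnorm 1)
  have h2 := hF 0 (e 0) (e 1) (e 2) (hnorm 0) (hnorm 2)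
  have hij : ∀ i j : Fin 3, ⟪e i, e j⟫ = if i = j then (1:ℝ) else 0 := by
    intro i j
    simp [he, EuclideanSpace.inner_single_left, EuclideanSpace.single_apply, eq_comm]
  rw [sub_zero] at h1 h2
  simp only [hij] at h1 h2
  norm_num [Fin.ext_iff, hnorm] at h1 h2
  rw [← h2] at h1
  exact one_ne_zero h1
end

section
/- Let x₁, x₂, n₁, n₂ ∈ ℝ³ with ‖n₁‖ = 1 and ‖n₂‖ = 1, and set a = ⟪x₂ - x₁, n₁⟫, b = ⟪x₂ - x₁, n₂⟫, c = ⟪x₂ - x₁, x₂ - x₁⟫, d = ⟪n₁, n₂⟫. Suppose v̄₁, v̄₂, v̄₃ ∈ ℝ³ satisfy ⟪v̄₁, v̄₁⟫ = 1, ⟪v̄₂, v̄₂⟫ = 1, ⟪v̄₁, v̄₂⟫ = d, ⟪v̄₁, v̄₃⟫ = a, ⟪v̄₂, v̄₃⟫ = b, ⟪v̄₃, v̄₃⟫ = c, and let x̄₁ ∈ ℝ³ be arbitrary. Then, setting n̄₁ = v̄₁, n̄₂ = v̄₂, x̄₂ = x̄₁ + v̄₃, there exist t ∈ ℝ³ and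 a linear isometry equivalence Q of ℝ³ such that t + Q x̄₁ = x₁, Q n̄₁ = n₁, t + Q x̄₂ = x₂, and Q n̄₂ = n₂; i.e. the reconstructed pair ((x̄₁, n̄₁), (x̄₂, n̄₂)) lies in the same E(3) orbit as ((x₁, n₁), (x₂, n₂)). -/
open scoped RealInnerProductSpace
open FiniteDimensional

noncomputable section

local notation "E3" => EuclideanSpace ℝ (Fin 3)

/-- The linear map sending coefficients to the corresponding combination of three vectors. -/
def tripleComb (a₁ a₂ a₃ : E3) : (Fin 3 → ℝ) →ₗ[ℝ] E3 where
  toFun c := c 0 • a₁ + c 1 • a₂ + c 2 • a₃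
  map_add' c d := by simp [add_smul]; module
  map_smul' r c := by simp [mul_smul, smul_add]

theorem exists_isometry_of_gram (v₁ v₂ v₃ w₁ w₂ w₃ : E3)
    (h : ∀ c : Fin 3 → ℝ,
      ⟪tripleComb w₁ w₂ w₃ c, tripleComb w₁ w₂ w₃ c⟫ =
      ⟪tripleComb v₁ v₂ v₃ c, tripleComb v₁ v₂ v₃ c⟫) :
    ∃ Q : E3 ≃ₗᵢ[ℝ] E3, Q v₁ = w₁ ∧ Q v₂ = w₂ ∧ Q v₃ = w₃ := by
  set Tv := tripleComb v₁ v₂ v₃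
  set Tw := tripleComb w₁ w₂ w₃
  have hle : LinearMap.ker Tv ≤ LinearMap.ker Tw := by
    intro c hc
    rw [LinearMap.mem_ker] at hc ⊢
    have := h c
    rw [hc, inner_zero_left] at this
    exact inner_self_eq_zero.mp this
  set S := LinearMap.range Tv with hS
  set L₀ : ↥S →ₗ[ℝ] E3 :=
    (Submodule.liftQ (LinearMap.ker Tv) Tw hle).comp
      (Tv.quotKerEquivRange.symm : ↥S →ₗ[ℝ] _) with hL₀
  have hL₀_apply : ∀ c : Fin 3 → ℝ, L₀ ⟨Tv c, LinearMap.mem_range_self Tv c⟩ = Tw c := by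
    intro c
    have h1 : Tv.quotKerEquivRange (Submodule.Quotient.mk c) =
        ⟨Tv c, LinearMap.mem_range_self Tv c⟩ := by
      rfl
    have h2 : (Tv.quotKerEquivRange.symm ⟨Tv c, LinearMap.mem_range_self Tv c⟩ :
        (Fin 3 → ℝ) ⧸ LinearMap.ker Tv) = Submodule.Quotient.mk c := by
      rw [← h1, LinearEquiv.symm_apply_apply]
    simp [hL₀, h2]
  have hnorm : ∀ s : ↥S, ‖L₀ s‖ = ‖s‖ := by
    rintro ⟨s, hs⟩
    obtain ⟨c, rfl⟩ := hs
    rw [hL₀_apply c]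
    have := h c
    rw [real_inner_self_eq_norm_sq, real_inner_self_eq_norm_sq] at this
    have h2 : ‖Tw c‖ = ‖Tv c‖ := by
      nlinarith [norm_nonneg (Tw c), norm_nonneg (Tv c)]
    simpa using h2
  set L : ↥S →ₗᵢ[ℝ] E3 := ⟨L₀, hnorm⟩
  set Q := (L.extend.toLinearIsometryEquiv rfl)
  have hQ : ∀ c : Fin 3 → ℝ, Q (Tv c) = Tw c := by
    intro c
    have : Q (Tv c) = L.extend (Tv c) := L.extend.toLinearIsometryEquiv_apply rfl _
    rw [this]
    have := L.extend_apply ⟨Tv c, LinearMap.mem_range_self Tv c⟩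
    simpa [L, hL₀_apply c] using this
  refine ⟨Q, ?_, ?_, ?_⟩
  · have := hQ ![1, 0, 0]
    simpa [Tv, Tw, tripleComb] using this
  · have := hQ ![0, 1, 0]
    simpa [Tv, Tw, tripleComb] using this
  · have := hQ ![0, 0, 1]
    simpa [Tv, Tw, tripleComb] using this

end

/-- The representer construction: any list of vectors `v̄₁, v̄₂, v̄₃` realizing the Gram
matrix determined by the values of the invariants `ι₁, ι₂, ι₃, ι₄` at
`((x₁, n₁), (x₂, n₂))`, together with an arbitrary base point `x̄₁`, reconstructs the
pair `((x₁, n₁), (x₂, n₂))` up to a Euclidean motion. -/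
theorem representer_construction
    (x₁ x₂ n₁ n₂ : EuclideanSpace ℝ (Fin 3)) (hn₁ : ‖n₁‖ = 1) (hn₂ : ‖n₂‖ = 1)
    (v₁ v₂ v₃ : EuclideanSpace ℝ (Fin 3))
    (h₁₁ : ⟪v₁, v₁⟫ = 1) (h₂₂ : ⟪v₂, v₂⟫ = 1)
    (h₁₂ : ⟪v₁, v₂⟫ = ⟪n₁, n₂⟫)
    (h₁₃ : ⟪v₁, v₃⟫ = ⟪x₂ - x₁, n₁⟫)
    (h₂₃ : ⟪v₂, v₃⟫ = ⟪x₂ - x₁, n₂⟫)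
    (h₃₃ : ⟪v₃, v₃⟫ = ⟪x₂ - x₁, x₂ - x₁⟫)
    (y₁ : EuclideanSpace ℝ (Fin 3)) :
    ∃ (t : EuclideanSpace ℝ (Fin 3))
      (Q : EuclideanSpace ℝ (Fin 3) ≃ₗᵢ[ℝ] EuclideanSpace ℝ (Fin 3)),
      t + Q y₁ = x₁ ∧ Q v₁ = n₁ ∧ t + Q (y₁ + v₃) = x₂ ∧ Q v₂ = n₂ := by
  have hn₁' : ⟪n₁, n₁⟫ = 1 := by
    rw [real_inner_self_eq_norm_sq, hn₁]; norm_num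
  have hn₂' : ⟪n₂, n₂⟫ = 1 := by
    rw [real_inner_self_eq_norm_sq, hn₂]; norm_num
  obtain ⟨Q, hQ₁, hQ₂, hQ₃⟩ := exists_isometry_of_gram v₁ v₂ v₃ n₁ n₂ (x₂ - x₁) (by
    intro c
    simp only [tripleComb, LinearMap.coe_mk, AddHom.coe_mk,
      inner_add_add_self, inner_add_left, inner_add_right, real_inner_smul_left, real_inner_smul_right]
    have c12 : (⟪n₂, n₁⟫ : ℝ) = ⟪n₁, n₂⟫ := real_inner_comm _ _
    have c13 : (⟪n₁, x₂ - x₁⟫ : ℝ) = ⟪x₂ - x₁, n₁⟫ := real_inner_comm _ _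
    have c23 : (⟪n₂, x₂ - x₁⟫ : ℝ) = ⟪x₂ - x₁, n₂⟫ := real_inner_comm _ _
    have d12 : (⟪v₂, v₁⟫ : ℝ) = ⟪v₁, v₂⟫ := real_inner_comm _ _
    have d13 : (⟪v₃, v₁⟫ : ℝ) = ⟪v₁, v₃⟫ := real_inner_comm _ _
    have d23 : (⟪v₃, v₂⟫ : ℝ) = ⟪v₂, v₃⟫ := real_inner_comm _ _
    simp only [d12, d13, d23, hn₁', hn₂', h₁₁, h₂₂, h₁₂, h₁₃, h₂₃, h₃₃, c12, c13, c23])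
  refine ⟨x₁ - Q y₁, Q, by abel, hQ₁, ?_, hQ₂⟩
  rw [map_add, hQ₃]
  abel
end
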